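/- arXiv:1801.06824 — 4 statements merged into one kernel-verified Lean document; each statement's English description precedes it below -/
import Mathlib

section
/- For every positive integer i, let G_i be the full join of a path P on i² vertices and an independent set A on i vertices. Then χ^ℓ_{fan,2}(G_i) ≤ 2, i.e., for every 2-list assignment L of G_i there is an L-coloring with no monochromatic fan on more than 2 vertices. -/
/-- The full join of a path on `i²` vertices and an independent set on `i` vertices. -/
def fullJoinPathIndep (i : ℕ) : SimpleGraph (Fin (i ^ 2) ⊕ Fin i) where
  Adj x y :=
    match x, y with
    | .inl a, .inl b => (a : ℕ) + 1 = b ∨ (b : ℕ) + 1 = a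
    | .inl _, .inr _ => True
    | .inr _, .inl _ => True
    | .inr _, .inr _ => False
  symm := by constructor; rintro (a | a) (b | b) h <;> simp_all <;> tauto
  loopless := by constructor; rintro (a | a) h <;> simp_all

/-!
Colour the path greedily from its lists, so that consecutive path vertices get distinct
colours, and give the independent vertices arbitrary colours from their lists. The centre and
the first two path vertices of a fan form a triangle, and at most one vertex of a triangle lies
in the independent set, so some edge of the triangle joins two path vertices and is not
monochromatic.
-/

theorem Nat.exists_listColoring_succ_ne {α : Type*} (L : ℕ → Set α)
    (hL : ∀ n, (L n).Nontrivial) :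
    ∃ f : ℕ → α, (∀ n, f n ∈ L n) ∧ ∀ n, f (n + 1) ≠ f n := by
  choose next next_mem next_ne using fun n a => (hL (n + 1)).exists_ne a
  let f : ℕ → α := fun n => Nat.rec (hL 0).nonempty.some next n
  refine ⟨f, ?_, fun n => next_ne n (f n)⟩
  rintro (_ | n)
  · exact (hL 0).nonempty.some_mem
  · exact next_mem n (f n)

namespace SimpleGraph

theorem pathGraph_exists_listColoring {α : Type*} {n : ℕ} (L : Fin n → Set α)
    (hL : ∀ v, (L v).Nontrivial) :
    ∃ f : Fin n → α, (∀ v, f v ∈ L v) ∧ ∀ u v, (pathGraph n).Adj u v → f u ≠ f v := by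
  cases n with
  | zero => exact ⟨finZeroElim, finZeroElim, finZeroElim⟩
  | succ k =>
    obtain ⟨f, f_mem, f_ne⟩ :=
      Nat.exists_listColoring_succ_ne (fun m => L ⟨min m k, by omega⟩) fun m => hL _
    refine ⟨fun v => f v, fun v => ?_, ?_⟩
    · simpa [Nat.min_eq_left (Nat.le_of_lt_succ v.isLt)] using f_mem v
    · intro u v huv
      rcases pathGraph_adj.mp huv with h | h <;> simp only [← h]
      exacts [(f_ne u).symm, f_ne v]

theorem IsIndepSet.not_monochromatic_triangle {V C : Type*} {G : SimpleGraph V} {S : Set V}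
    (hS : G.IsIndepSet S) {φ : V → C}
    (hφ : ∀ x y, G.Adj x y → φ x = φ y → x ∈ S ∨ y ∈ S) {u x y : V}
    (hux : G.Adj u x) (huy : G.Adj u y) (hxy : G.Adj x y) :
    ¬ (φ x = φ u ∧ φ y = φ u) := by
  rintro ⟨hx, hy⟩
  have indep {a b : V} (ha : a ∈ S) (hb : b ∈ S) (hab : G.Adj a b) : False :=
    hS ha hb hab.ne hab
  rcases hφ u x hux hx.symm with hu | hxS
  · rcases hφ x y hxy (hx.trans hy.symm) with hxS | hyS
    exacts [indep hu hxS hux, indep hu hyS huy]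
  · rcases hφ u y huy hy.symm with hu | hyS
    exacts [indep hu hxS hux, indep hxS hyS hxy]

end SimpleGraph

theorem fullJoinPathIndep_adj_inl {i : ℕ} {a b : Fin (i ^ 2)} :
    (fullJoinPathIndep i).Adj (.inl a) (.inl b) ↔ (SimpleGraph.pathGraph (i ^ 2)).Adj a b := by
  rw [SimpleGraph.pathGraph_adj]
  rfl

theorem fullJoinPathIndep_isIndepSet_range_inr (i : ℕ) :
    (fullJoinPathIndep i).IsIndepSet (Set.range Sum.inr) := by
  rintro _ ⟨a, rfl⟩ _ ⟨b, rfl⟩ _ h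
  exact h

theorem stmt_1_general (i : ℕ)
    (L : Fin (i ^ 2) ⊕ Fin i → Finset ℕ) (hL : ∀ v, 2 ≤ (L v).card) :
    ∃ φ : Fin (i ^ 2) ⊕ Fin i → ℕ, (∀ v, φ v ∈ L v) ∧
      ∀ m : ℕ, 2 ≤ m →
        ¬ ∃ (u : Fin (i ^ 2) ⊕ Fin i) (v : Fin m → Fin (i ^ 2) ⊕ Fin i),
            Function.Injective v ∧ (∀ j, v j ≠ u) ∧
            (∀ j, (fullJoinPathIndep i).Adj u (v j)) ∧
            (∀ j k : Fin m, (j : ℕ) + 1 = (k : ℕ) → (fullJoinPathIndep i).Adj (v j) (v k)) ∧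
            (∀ j, φ (v j) = φ u) := by
  have hL' (v) : (L v : Set ℕ).Nontrivial := Finset.one_lt_card_iff_nontrivial.mp (hL v)
  obtain ⟨f, f_mem, f_ne⟩ :=
    SimpleGraph.pathGraph_exists_listColoring (fun a => (L (.inl a) : Set ℕ)) fun a => hL' _
  let φ : Fin (i ^ 2) ⊕ Fin i → ℕ := Sum.elim f fun b => (hL' (.inr b)).nonempty.some
  have hφ : ∀ x y, (fullJoinPathIndep i).Adj x y → φ x = φ y →
      x ∈ Set.range Sum.inr ∨ y ∈ Set.range Sum.inr := by
    rintro (a | a) (b | b) hxy hxy_eq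
    · exact (f_ne a b (fullJoinPathIndep_adj_inl.mp hxy) hxy_eq).elim
    · exact .inr ⟨b, rfl⟩
    all_goals exact .inl ⟨a, rfl⟩
  refine ⟨φ, ?_, ?_⟩
  · rintro (a | b)
    exacts [f_mem a, (hL' (.inr b)).nonempty.some_mem]
  · rintro m hm ⟨u, v, -, -, hu, hv, hcol⟩
    exact (fullJoinPathIndep_isIndepSet_range_inr i).not_monochromatic_triangle hφ
      (hu ⟨0, by omega⟩) (hu ⟨1, by omega⟩) (hv ⟨0, by omega⟩ ⟨1, by omega⟩ rfl)
      ⟨hcol _, hcol _⟩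

/-- `χ^ℓ_{fan,2}(G_i) ≤ 2`: for every 2-list assignment `L` of the full join
`G_i` of a path on `i²` vertices with an independent set on `i` vertices, there is an
`L`-coloring with no monochromatic fan on more than 2 vertices (a fan with `m ≥ 2` path
vertices has `m + 1 ≥ 3` vertices). -/
theorem stmt_1 (i : ℕ) (hi : 1 ≤ i)
    (L : Fin (i ^ 2) ⊕ Fin i → Finset ℕ) (hL : ∀ v, 2 ≤ (L v).card) :
    ∃ φ : Fin (i ^ 2) ⊕ Fin i → ℕ, (∀ v, φ v ∈ L v) ∧
      ∀ m : ℕ, 2 ≤ m →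
        ¬ ∃ (u : Fin (i ^ 2) ⊕ Fin i) (v : Fin m → Fin (i ^ 2) ⊕ Fin i),
            Function.Injective v ∧ (∀ j, v j ≠ u) ∧
            (∀ j, (fullJoinPathIndep i).Adj u (v j)) ∧
            (∀ j k : Fin m, (j : ℕ) + 1 = (k : ℕ) → (fullJoinPathIndep i).Adj (v j) (v k)) ∧
            (∀ j, φ (v j) = φ u) :=
  stmt_1_general i L hL
end

section
/- Let f be a hereditary graph parameter and g : ℕ² → ℕ a function such that f(G) ≤ g(f(G[X]), f(G−X)) for every graph G and every vertex subset X. Then for all integers p and s there exists an integer p′ such that every graph G with χ_{f,p}(G) ≤ s satisfies f(H) ≤ p′ for every induced subgraph H of G (equivalently col_{f,p′}(G) = 1). -/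
/-- Iterated bound: `PBound g p n` bounds `f S` whenever `S` uses at most `n` colors. -/
def PBound (g : ℕ → ℕ → ℕ) (p : ℕ) : ℕ → ℕ
  | 0 => p
  | n + 1 =>
      ((Finset.range (p + 1)) ×ˢ (Finset.range (PBound g p n + 1))).sup
        fun ab => g ab.1 ab.2

lemma stmt3_aux (g : ℕ → ℕ → ℕ) (p : ℕ) {V : Type} [Fintype V] [DecidableEq V]
    (f : Finset V → ℕ)
    (hmono : ∀ A B : Finset V, A ⊆ B → f A ≤ f B)
    (hsplit : ∀ S X : Finset V, X ⊆ S → f S ≤ g (f X) (f (S \ X)))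
    {s : ℕ} (φ : V → Fin s)
    (hφ : ∀ c : Fin s, f (Finset.univ.filter fun v => φ v = c) ≤ p)
    (h0 : f ∅ ≤ p) :
    ∀ C : Finset (Fin s), ∀ S : Finset V, (∀ v ∈ S, φ v ∈ C) →
      f S ≤ PBound g p C.card := by
  intro C
  induction C using Finset.induction with
  | empty =>
      intro S hS
      have : S = ∅ := by
        ext v; simp only [Finset.notMem_empty, iff_false]
        intro hv; exact absurd (hS v hv) (by simp)
      simpa [this, PBound] using h0
  | @insert a C' ha ih =>
      intro S hS
      set X : Finset V := S.filter (fun v => φ v = a) with hX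
      have hXS : X ⊆ S := Finset.filter_subset _ _
      have hfX : f X ≤ p := by
        refine le_trans (hmono _ _ ?_) (hφ a)
        intro v hv
        simp only [hX, Finset.mem_filter] at hv ⊢
        exact ⟨Finset.mem_univ v, hv.2⟩
      have hfD : f (S \ X) ≤ PBound g p C'.card := by
        apply ih
        intro v hv
        rw [Finset.mem_sdiff] at hv
        have hmem := hS v hv.1
        rw [Finset.mem_insert] at hmem
        rcases hmem with h | h
        · exact absurd (by simp [hX, Finset.mem_filter, hv.1, h]) hv.2
        · exact h
      rw [Finset.card_insert_of_notMem ha]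
      calc f S ≤ g (f X) (f (S \ X)) := hsplit S X hXS
        _ ≤ _ := by
            show _ ≤ PBound g p (C'.card + 1)
            rw [PBound]
            apply Finset.le_sup (f := fun ab => g ab.1 ab.2) (b := (f X, f (S \ X)))
            simp only [Finset.mem_product, Finset.mem_range]
            exact ⟨Nat.lt_succ_of_le hfX, Nat.lt_succ_of_le hfD⟩

/-- if `f` is a hereditary graph parameter (encoded on vertex subsets of a
fixed graph, `f X` being the value on the induced subgraph on `X`) and
`f(G[S]) ≤ g(f(G[X]), f(G[S \ X]))` for all `X ⊆ S`, then for all `p, s` there is `p'`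
such that every graph admitting an `(f,p)`-proper coloring with `s` colors satisfies
`f(H) ≤ p'` for every nonempty induced subgraph `H` (i.e. `col_{f,p'} = 1`). -/
theorem stmt_3 (g : ℕ → ℕ → ℕ) (p s : ℕ) :
    ∃ p' : ℕ, ∀ (V : Type) (_ : Fintype V) (_ : DecidableEq V)
      (f : Finset V → ℕ),
      (∀ A B : Finset V, A ⊆ B → f A ≤ f B) →
      (∀ S X : Finset V, X ⊆ S → f S ≤ g (f X) (f (S \ X))) →
      (∃ φ : V → Fin s, ∀ c : Fin s, f (Finset.univ.filter fun v => φ v = c) ≤ p) →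
      ∀ S : Finset V, S.Nonempty → f S ≤ p' := by
  refine ⟨PBound g p s, ?_⟩
  intro V _ _ f hmono hsplit ⟨φ, hφ⟩ S hSne
  rcases Nat.eq_zero_or_pos s with rfl | hs
  · obtain ⟨v, _⟩ := hSne
    exact (φ v).elim0
  · have h0 : f ∅ ≤ p := by
      refine le_trans (hmono _ _ (Finset.empty_subset _)) (hφ ⟨0, hs⟩)
    have := stmt3_aux g p f hmono hsplit φ hφ h0 Finset.univ S (fun v _ => Finset.mem_univ _)
    simpa using this
end

section
/- Let p be an integer and α a non-negative real. If G is a graph in which every subgraph H with at most p vertices has at most α·|V(H)| edges, and every non-empty induced subgraph of G contains an s-island inducing a subgraph whose components all have at most p vertices (i.e., col_{⋆,p}(G) ≤ s), then |E(G)| ≤ |V(G)|·(α + s − 1); consequently the average degree of G is less than 2(col_{⋆,p}(G) + α). -/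
/-!
Count edges as ordered adjacent pairs, `G.interedges S S`. Repeatedly remove an `s`-island `I`
from the remaining vertex set `S`. The pairs inside `I` split along the connected components of
`G[I]`, each with at most `p` vertices and hence at most `2α` pairs per vertex; every vertex of
`I` has at most `s - 1` neighbours in `S \ I`, and each such edge is counted in both directions.
Summing over the removal sequence gives at most `2 |V| (α + s - 1)` ordered pairs.
-/

open Finset

namespace SimpleGraph

variable {V : Type*} [DecidableEq V] (G : SimpleGraph V)

open Classical in
noncomputable def inducedComponents (I : Finset V) : Finpartition I :=
  Finpartition.ofSetSetoid (Setoid.ker fun u =>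
    if hu : u ∈ I then some ((G.induce (I : Set V)).connectedComponentMk ⟨u, hu⟩) else none) I

variable {G} {I : Finset V} {u w : V}

theorem mem_part_inducedComponents_iff (hu : u ∈ I) (hw : w ∈ I) :
    w ∈ (G.inducedComponents I).part u ↔ (G.induce (I : Set V)).Reachable ⟨u, hu⟩ ⟨w, hw⟩ := by
  rw [inducedComponents, Finpartition.mem_part_ofSetSetoid_iff_rel, Setoid.ker_def]
  simp [hu, hw, ConnectedComponent.eq]

theorem card_part_inducedComponents (hu : u ∈ I) :
    #((G.inducedComponents I).part u) =
      {w | (G.induce (I : Set V)).Reachable ⟨u, hu⟩ w}.ncard := by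
  rw [← Set.ncard_coe_finset, ← Set.ncard_image_of_injective _ Subtype.val_injective]
  congr 1
  ext w
  constructor
  · intro hw
    have hwI := (G.inducedComponents I).part_subset u hw
    exact ⟨⟨w, hwI⟩, (mem_part_inducedComponents_iff hu hwI).1 hw, rfl⟩
  · rintro ⟨w, hw, rfl⟩
    exact (mem_part_inducedComponents_iff hu w.2).2 hw

variable [DecidableRel G.Adj]

theorem interedges_part_inducedComponents (u : V) :
    G.interedges ((G.inducedComponents I).part u) I =
      G.interedges ((G.inducedComponents I).part u) ((G.inducedComponents I).part u) := by
  refine subset_antisymm (fun q hq => ?_) (G.interedges_mono le_rfl (Finpartition.part_subset _ _))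
  obtain ⟨ha, hb, hab⟩ := G.mem_interedges_iff.1 hq
  have hu : u ∈ I := (G.inducedComponents I).part_nonempty.1 ⟨_, ha⟩
  have haI := (G.inducedComponents I).part_subset u ha
  refine G.mem_interedges_iff.2 ⟨ha, (mem_part_inducedComponents_iff hu hb).2 ?_, hab⟩
  exact ((mem_part_inducedComponents_iff hu haI).1 ha).trans
    (Adj.reachable (by exact hab : (G.induce (I : Set V)).Adj ⟨_, haI⟩ ⟨_, hb⟩))

theorem card_interedges_self_le_of_components_card_le {p : ℕ} {α : ℝ}
    (hsparse : ∀ S : Finset V, #S ≤ p → (#(G.interedges S S) : ℝ) ≤ 2 * (α * #S))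
    (hcomp : ∀ v : (I : Set V), {w | (G.induce (I : Set V)).Reachable v w}.ncard ≤ p) :
    (#(G.interedges I I) : ℝ) ≤ 2 * (α * #I) := by
  set P := G.inducedComponents I
  rw [interedges, Rel.card_interedges_finpartition_left _ P, ← P.sum_card_parts]
  push_cast
  rw [mul_sum, mul_sum]
  refine sum_le_sum fun C hC => ?_
  obtain ⟨u, hu, rfl⟩ := P.part_surjOn hC
  rw [← interedges, interedges_part_inducedComponents]
  exact hsparse _ ((card_part_inducedComponents hu).trans_le (hcomp ⟨u, hu⟩))

variable (G)

theorem card_interedges_union_left {s₁ s₂ : Finset V} (h : Disjoint s₁ s₂) (t : Finset V) :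
    #(G.interedges (s₁ ∪ s₂) t) = #(G.interedges s₁ t) + #(G.interedges s₂ t) := by
  rw [← card_union_of_disjoint (G.interedges_disjoint_left h t)]
  congr 1
  ext
  simp only [mem_union, mem_interedges_iff, or_and_right]

theorem card_interedges_union_right (s : Finset V) {t₁ t₂ : Finset V} (h : Disjoint t₁ t₂) :
    #(G.interedges s (t₁ ∪ t₂)) = #(G.interedges s t₁) + #(G.interedges s t₂) := by
  rw [← card_union_of_disjoint (G.interedges_disjoint_right s h)]
  congr 1
  ext
  simp only [mem_union, mem_interedges_iff]
  tauto

variable [Fintype V]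

theorem card_interedges_eq_sum_card_neighborFinset_inter (s t : Finset V) :
    #(G.interedges s t) = ∑ u ∈ s, #(G.neighborFinset u ∩ t) := by
  rw [interedges, Rel.interedges_eq_biUnion, card_biUnion]
  · refine sum_congr rfl fun u _ => ?_
    rw [card_map]
    congr 1
    ext w
    simp [and_comm]
  · intro u _ w _ huw
    rw [Function.onFun, Finset.disjoint_left]
    simp only [mem_map, Function.Embedding.coeFn_mk]
    rintro _ ⟨_, _, rfl⟩ ⟨_, _, h⟩
    exact huw (Prod.ext_iff.1 h).1.symm

variable {G}

theorem card_interedges_self_le_of_subset {S : Finset V} (hIS : I ⊆ S) :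
    #(G.interedges S S) ≤ #(G.interedges I I) + #(G.interedges (S \ I) (S \ I)) +
      2 * ∑ u ∈ I, #((G.neighborFinset u ∩ S) \ I) := by
  have hdisj : Disjoint I (S \ I) := disjoint_sdiff
  have hcross : #(G.interedges I (S \ I)) = ∑ u ∈ I, #((G.neighborFinset u ∩ S) \ I) := by
    simp only [card_interedges_eq_sum_card_neighborFinset_inter, inter_sdiff_assoc]
  have hsymm : #(G.interedges (S \ I) I) = #(G.interedges I (S \ I)) :=
    haveI := G.symm; Rel.card_interedges_comm _ _
  have hS : #(G.interedges S S) = #(G.interedges I I) + #(G.interedges I (S \ I)) +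
      (#(G.interedges (S \ I) I) + #(G.interedges (S \ I) (S \ I))) := by
    conv_lhs => rw [← union_sdiff_of_subset hIS]
    rw [card_interedges_union_left _ hdisj, card_interedges_union_right _ _ hdisj,
      card_interedges_union_right _ _ hdisj]
  omega

theorem card_interedges_self_le_of_forall_exists_island {s : ℕ} {α : ℝ}
    (hisland : ∀ S : Finset V, S.Nonempty → ∃ I ⊆ S, I.Nonempty ∧
      (∀ v ∈ I, #((G.neighborFinset v ∩ S) \ I) < s) ∧
      (#(G.interedges I I) : ℝ) ≤ 2 * (α * #I))
    (S : Finset V) :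
    (#(G.interedges S S) : ℝ) ≤ 2 * #S * (α + s - 1) := by
  induction S using Finset.strongInduction with
  | H S ih =>
  rcases S.eq_empty_or_nonempty with rfl | hS
  · simp
  obtain ⟨I, hIS, hI, hout, hin⟩ := hisland S hS
  have hrest := ih _ (sdiff_ssubset hIS hI)
  rw [cast_card_sdiff hIS] at hrest
  have hcross : (∑ u ∈ I, #((G.neighborFinset u ∩ S) \ I) : ℝ) ≤ #I * (s - 1) := by
    rw [← nsmul_eq_mul, ← sum_const]
    refine sum_le_sum fun u hu => ?_
    have : (#((G.neighborFinset u ∩ S) \ I) + 1 : ℝ) ≤ s := by exact_mod_cast hout u hu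
    linarith
  have hsplit : (#(G.interedges S S) : ℝ) ≤ #(G.interedges I I) +
      #(G.interedges (S \ I) (S \ I)) + 2 * ∑ u ∈ I, (#((G.neighborFinset u ∩ S) \ I) : ℝ) := by
    exact_mod_cast card_interedges_self_le_of_subset hIS
  linarith

end SimpleGraph

theorem stmt_5_general {V : Type} [Fintype V] [DecidableEq V]
    (G : SimpleGraph V) [DecidableRel G.Adj]
    (p s : ℕ) (α : ℝ)
    (hsparse : ∀ S : Finset V, S.card ≤ p →
      (((S ×ˢ S).filter fun q => G.Adj q.1 q.2).card : ℝ) ≤ 2 * (α * S.card))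
    (hcol : ∀ S : Finset V, S.Nonempty → ∃ I ⊆ S, I.Nonempty ∧
      (∀ v ∈ I, ((G.neighborFinset v ∩ S) \ I).card < s) ∧
      ∀ v : (I : Set V), {w | (G.induce (I : Set V)).Reachable v w}.ncard ≤ p) :
    (G.edgeFinset.card : ℝ) ≤ (Fintype.card V) * (α + s - 1) ∧
      (Nonempty V →
        2 * (G.edgeFinset.card : ℝ) / (Fintype.card V) < 2 * (s + α)) := by
  have hpairs := SimpleGraph.card_interedges_self_le_of_forall_exists_island (fun S hS => by
    obtain ⟨I, hIS, hI, hout, hcomp⟩ := hcol S hS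
    exact ⟨I, hIS, hI, hout,
      SimpleGraph.card_interedges_self_le_of_components_card_le hsparse hcomp⟩) univ
  have hE : (#G.edgeFinset : ℝ) ≤ Fintype.card V * (α + s - 1) := by
    simp only [G.card_interedges_eq_sum_card_neighborFinset_inter, inter_univ,
      SimpleGraph.card_neighborFinset_eq_degree, G.sum_degrees_eq_twice_card_edges,
      card_univ] at hpairs
    push_cast at hpairs
    linarith
  refine ⟨hE, fun _ => ?_⟩
  have hV : (0 : ℝ) < Fintype.card V := by exact_mod_cast Fintype.card_pos
  rw [div_lt_iff₀ hV]
  linarith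

/-- if every subgraph `H` of `G` with at most `p` vertices has at most
`α·|V(H)|` edges, and `col_{⋆,p}(G) ≤ s` (every nonempty induced subgraph `G[S]` contains
an `s`-island `I` all of whose induced components have at most `p` vertices), then
`|E(G)| ≤ |V(G)|·(α + s - 1)`; consequently the average degree of `G` is less than
`2(s + α)`. -/
theorem stmt_5 {V : Type} [Fintype V] [DecidableEq V]
    (G : SimpleGraph V) [DecidableRel G.Adj]
    (p s : ℕ) (hs : 1 ≤ s) (α : ℝ) (hα : 0 ≤ α)
    (hsparse : ∀ S : Finset V, S.card ≤ p →
      (((S ×ˢ S).filter fun q => G.Adj q.1 q.2).card : ℝ) ≤ 2 * (α * S.card))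
    (hcol : ∀ S : Finset V, S.Nonempty → ∃ I ⊆ S, I.Nonempty ∧
      (∀ v ∈ I, ((G.neighborFinset v ∩ S) \ I).card < s) ∧
      ∀ v : (I : Set V), {w | (G.induce (I : Set V)).Reachable v w}.ncard ≤ p) :
    (G.edgeFinset.card : ℝ) ≤ (Fintype.card V) * (α + s - 1) ∧
      (Nonempty V →
        2 * (G.edgeFinset.card : ℝ) / (Fintype.card V) < 2 * (s + α)) :=
  stmt_5_general G p s α hsparse hcol
end

section
/- Let t and n be positive integers and let P_n^t be the t-th power of the path on n vertices (vertices 1,…,n, with i ~ j iff 1 ≤ |i−j| ≤ t). For every 2-list assignment L of P_n^t there exists an L-coloring in which every monochromatic connected component has at most 2t² vertices; i.e., χ^ℓ_{⋆,2t²}(P_n^t) ≤ 2. -/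
/-- The `t`-th power `P_n^t` of the path on `n` vertices: `i ~ j` iff `1 ≤ |i - j| ≤ t`. -/
def pathPower (t n : ℕ) : SimpleGraph (Fin n) where
  Adj i j := i ≠ j ∧ (i : ℕ) - (j : ℕ) ≤ t ∧ (j : ℕ) - (i : ℕ) ≤ t
  symm := ⟨by intro i j h; exact ⟨h.1.symm, h.2.2, h.2.1⟩⟩
  loopless := ⟨by intro i h; exact h.1 rfl⟩

/-!
Cut the path into blocks of `t(t+1)` vertices, each split into `t`-tuples `T₀, …, T_t`; the
vertices of `T₀` take any colour from their lists and those of `T_i` avoid the colour of the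
`i`-th vertex of `T₀`. Since edges join vertices at distance at most `t`, a connected set of
vertices meets every window of `t` consecutive vertices lying between two of its members. So a
monochromatic component containing the `i`-th vertex of `T₀` cannot reach `T_i` of that block and
ends within `t²` of the block start. A component starting at `p` therefore either starts in `T₀`
and ends within `t²` of `p`, or it starts after `T₀`, and then before it leaves its block it must
enter `T₀` of the next block, which again stops it at most `t²` further on.
-/

theorem Nat.ncard_le_of_forall_lt_add {C : Set ℕ} {d : ℕ}
    (h : ∀ p ∈ C, ∀ q ∈ C, p ≤ q → q < p + d) : C.ncard ≤ d := by
  rcases C.eq_empty_or_nonempty with rfl | hC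
  · simp
  have hsub : C ⊆ Set.Ico (sInf C) (sInf C + d) := fun q hq =>
    ⟨Nat.sInf_le hq, h _ (Nat.sInf_mem hC) q hq (Nat.sInf_le hq)⟩
  calc C.ncard ≤ (Set.Ico (sInf C) (sInf C + d)).ncard :=
        Set.ncard_le_ncard hsub (Set.finite_Ico _ _)
    _ = d := by rw [← Finset.coe_Ico, Set.ncard_coe_finset, Nat.card_Ico]; omega

theorem SimpleGraph.Reachable.exists_reachable_mem_Ico {V : Type*} {G : SimpleGraph V}
    {f : V → ℕ} {t : ℕ} (hf : ∀ x y, G.Adj x y → f y ≤ f x + t) {x y : V}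
    (hxy : G.Reachable x y) {a : ℕ} (hx : f x < a) (hy : a ≤ f y) :
    ∃ z, G.Reachable x z ∧ a ≤ f z ∧ f z < a + t := by
  obtain ⟨p⟩ := hxy
  induction p with
  | nil => omega
  | @cons x z y hadj _ ih =>
    by_cases hz : f z < a
    · obtain ⟨w, hzw, hw⟩ := ih hz hy
      exact ⟨w, hadj.reachable.trans hzw, hw⟩
    · exact ⟨z, hadj.reachable, by omega, by have := hf x z hadj; omega⟩

theorem SimpleGraph.exists_mem_image_reachable_Ico {V : Type*} {G : SimpleGraph V}
    {f : V → ℕ} {t : ℕ} (hf : ∀ x y, G.Adj x y → f y ≤ f x + t) (x₀ : V) :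
    ∀ p ∈ f '' {x | G.Reachable x₀ x}, ∀ q ∈ f '' {x | G.Reachable x₀ x}, ∀ a, p < a → a ≤ q →
      ∃ z ∈ f '' {x | G.Reachable x₀ x}, a ≤ z ∧ z < a + t := by
  rintro _ ⟨x, hx, rfl⟩ _ ⟨y, hy, rfl⟩ a hxa hay
  obtain ⟨z, hxz, hz⟩ := (Reachable.symm hx |>.trans hy).exists_reachable_mem_Ico hf hxa hay
  exact ⟨f z, ⟨z, Reachable.trans hx hxz, rfl⟩, hz⟩

namespace pathPower

variable {t n : ℕ} {C : Set ℕ}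

theorem lt_of_mem_initial_tuple
    (hgap : ∀ p ∈ C, ∀ q ∈ C, ∀ a, p < a → a ≤ q → ∃ z ∈ C, a ≤ z ∧ z < a + t)
    (hbar : ∀ b r s, r < t → s < t →
      b * (t * (t + 1)) + r ∈ C → b * (t * (t + 1)) + (r + 1) * t + s ∉ C)
    {b r : ℕ} (hr : r < t) (hbr : b * (t * (t + 1)) + r ∈ C) {q : ℕ} (hq : q ∈ C) :
    q < b * (t * (t + 1)) + (r + 1) * t := by
  by_contra! hle
  have : r < (r + 1) * t := by nlinarith
  obtain ⟨z, hz, hz₁, hz₂⟩ := hgap _ hbr q hq _ (by omega) hle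
  exact hbar b r (z - (b * (t * (t + 1)) + (r + 1) * t)) hr (by omega) hbr
    (by rwa [← Nat.add_sub_assoc hz₁, Nat.add_sub_cancel_left])

theorem lt_add_two_mul_sq (ht : 0 < t)
    (hgap : ∀ p ∈ C, ∀ q ∈ C, ∀ a, p < a → a ≤ q → ∃ z ∈ C, a ≤ z ∧ z < a + t)
    (hbar : ∀ b r s, r < t → s < t →
      b * (t * (t + 1)) + r ∈ C → b * (t * (t + 1)) + (r + 1) * t + s ∉ C)
    {p q : ℕ} (hp : p ∈ C) (hq : q ∈ C) (hpq : p ≤ q) : q < p + 2 * t ^ 2 := by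
  have hm : t * (t + 1) = t * t + t := Nat.mul_succ t t
  have hsq : t ^ 2 = t * t := sq t
  have tuple_le {r : ℕ} (hr : r < t) : (r + 1) * t ≤ t * t := Nat.mul_le_mul_right t hr
  obtain ⟨B, s, rfl, hs⟩ : ∃ B s, p = B * (t * (t + 1)) + s ∧ s < t * (t + 1) :=
    ⟨p / (t * (t + 1)), p % (t * (t + 1)), (Nat.div_add_mod' p _).symm,
      Nat.mod_lt p (by positivity)⟩
  by_cases hsT : s < t
  · have := lt_of_mem_initial_tuple hgap hbar hsT hp hq
    have := tuple_le hsT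
    omega
  have hnext : (B + 1) * (t * (t + 1)) = B * (t * (t + 1)) + t * (t + 1) := Nat.succ_mul _ _
  by_cases hqB : q < (B + 1) * (t * (t + 1))
  · omega
  obtain ⟨z, hz, hz₁, hz₂⟩ := hgap _ hp q hq ((B + 1) * (t * (t + 1))) (by omega) (by omega)
  have hzr : (B + 1) * (t * (t + 1)) + (z - (B + 1) * (t * (t + 1))) ∈ C := by
    rwa [Nat.add_sub_cancel' hz₁]
  have := lt_of_mem_initial_tuple hgap hbar (by omega) hzr hq
  have := tuple_le (show z - (B + 1) * (t * (t + 1)) < t by omega)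
  omega


/-- The `r`-th vertex of `T₀` in the block of `k`, where `k` lies in the tuple `T_{r+1}`. -/
def anchor (t k : ℕ) : ℕ :=
  k / (t * (t + 1)) * (t * (t + 1)) + (k % (t * (t + 1)) / t - 1)

theorem anchor_le (t k : ℕ) : anchor t k ≤ k := by
  have := Nat.div_le_self (k % (t * (t + 1))) t
  have := Nat.div_add_mod' k (t * (t + 1))
  unfold anchor
  omega

theorem mod_of_window {b r s : ℕ} (hr : r < t) (hs : s < t) :
    (b * (t * (t + 1)) + (r + 1) * t + s) % (t * (t + 1)) = (r + 1) * t + s := by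
  rw [add_assoc, add_comm, Nat.add_mul_mod_self_right, Nat.mod_eq_of_lt]
  nlinarith

theorem anchor_of_window {b r s : ℕ} (hr : r < t) (hs : s < t) :
    anchor t (b * (t * (t + 1)) + (r + 1) * t + s) = b * (t * (t + 1)) + r := by
  have ht : 0 < t := by omega
  have hwin : (r + 1) * t + s < t * (t + 1) := by nlinarith
  have hdiv : (b * (t * (t + 1)) + (r + 1) * t + s) / (t * (t + 1)) = b := by
    rw [add_assoc, add_comm, Nat.add_mul_div_right _ _ (by positivity), Nat.div_eq_of_lt hwin,
      zero_add]
  have htuple : ((r + 1) * t + s) / t = r + 1 := by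
    rw [Nat.add_comm, Nat.add_mul_div_right _ _ ht, Nat.div_eq_of_lt hs, zero_add]
  rw [anchor, hdiv, mod_of_window hr hs, htuple, Nat.add_sub_cancel]

noncomputable def avoidColor (s : Finset ℕ) (c : ℕ) : ℕ := sInf (s.erase c : Set ℕ)

theorem avoidColor_mem_erase {s : Finset ℕ} (hs : 1 < s.card) (c : ℕ) :
    avoidColor s c ∈ s.erase c :=
  Nat.sInf_mem (Finset.coe_nonempty.mpr (Finset.one_lt_card_iff_nontrivial.mp hs).erase_nonempty)

/-- `T₀` takes the least colour of each list; `T_{r+1}` avoids the colour of `anchor`, the `r`-th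
vertex of `T₀` (counting from `0`). -/
noncomputable def coloring (t : ℕ) (L : Fin n → Finset ℕ) (v : Fin n) : ℕ :=
  if (v : ℕ) % (t * (t + 1)) < t then sInf (L v : Set ℕ)
  else avoidColor (L v) (sInf (L ⟨anchor t v, (anchor_le t v).trans_lt v.isLt⟩ : Set ℕ))

theorem coloring_mem {L : Fin n → Finset ℕ} (hL : ∀ v, 2 ≤ (L v).card) (v : Fin n) :
    coloring t L v ∈ L v := by
  unfold coloring
  split_ifs
  · exact Nat.sInf_mem (Finset.coe_nonempty.mpr (Finset.card_pos.mp (by have := hL v; omega)))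
  · exact Finset.mem_of_mem_erase (avoidColor_mem_erase (hL v) _)

theorem coloring_ne {L : Fin n → Finset ℕ} (hL : ∀ v, 2 ≤ (L v).card) {u w : Fin n}
    {b r s : ℕ} (hr : r < t) (hs : s < t) (hu : (u : ℕ) = b * (t * (t + 1)) + r)
    (hw : (w : ℕ) = b * (t * (t + 1)) + (r + 1) * t + s) : coloring t L u ≠ coloring t L w := by
  have hu_mod : (u : ℕ) % (t * (t + 1)) < t := by
    rw [hu, add_comm, Nat.add_mul_mod_self_right, Nat.mod_eq_of_lt (by nlinarith)]
    exact hr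
  have hw_mod : ¬ (w : ℕ) % (t * (t + 1)) < t := by
    rw [hw, mod_of_window hr hs]
    nlinarith
  have hanchor : (⟨anchor t w, (anchor_le t w).trans_lt w.isLt⟩ : Fin n) = u :=
    Fin.ext (show anchor t w = u by rw [hw, anchor_of_window hr hs, hu])
  unfold coloring
  rw [if_pos hu_mod, if_neg hw_mod, hanchor]
  exact (Finset.ne_of_mem_erase (avoidColor_mem_erase (hL w) _)).symm

theorem adj_induce_le {S : Set (Fin n)} {x y : S}
    (h : ((pathPower t n).induce S).Adj x y) : ((y : Fin n) : ℕ) ≤ (x : Fin n) + t := by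
  have := (show (pathPower t n).Adj x y from h).2.2
  omega

end pathPower

theorem stmt_13_general (t n : ℕ) (ht : 1 ≤ t)
    (L : Fin n → Finset ℕ) (hL : ∀ v, 2 ≤ (L v).card) :
    ∃ φ : Fin n → ℕ, (∀ v, φ v ∈ L v) ∧
      ∀ v : Fin n,
        {w : {u | φ u = φ v} |
          ((pathPower t n).induce {u | φ u = φ v}).Reachable ⟨v, rfl⟩ w}.ncard ≤ 2 * t ^ 2 := by
  refine ⟨pathPower.coloring t L, pathPower.coloring_mem hL, fun v => ?_⟩
  set S := {u | pathPower.coloring t L u = pathPower.coloring t L v}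
  have hinj : Function.Injective fun w : S => ((w : Fin n) : ℕ) :=
    fun _ _ h => Subtype.ext (Fin.ext (by exact h))
  rw [← Set.ncard_image_of_injective _ hinj]
  refine Nat.ncard_le_of_forall_lt_add fun p hp q hq hpq => pathPower.lt_add_two_mul_sq ht
    (SimpleGraph.exists_mem_image_reachable_Ico (fun _ _ => pathPower.adj_induce_le) _) ?_
    hp hq hpq
  rintro b r s hr hs ⟨u, -, hu⟩ ⟨w, -, hw⟩
  exact pathPower.coloring_ne hL hr hs hu hw (u.2.trans w.2.symm)

/-- `χ^ℓ_{⋆,2t²}(P_n^t) ≤ 2`: for every 2-list assignment `L` of `P_n^t`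
there is an `L`-coloring in which every monochromatic connected component has at most
`2t²` vertices. -/
theorem stmt_13 (t n : ℕ) (ht : 1 ≤ t) (hn : 1 ≤ n)
    (L : Fin n → Finset ℕ) (hL : ∀ v, 2 ≤ (L v).card) :
    ∃ φ : Fin n → ℕ, (∀ v, φ v ∈ L v) ∧
      ∀ v : Fin n,
        {w : {u | φ u = φ v} |
          ((pathPower t n).induce {u | φ u = φ v}).Reachable ⟨v, rfl⟩ w}.ncard ≤ 2 * t ^ 2 :=
  stmt_13_general t n ht L hL
end
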